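/- Let C be a pointed category, K : Arrow C ⥤ C a functor, and κ : K ⟶ Arrow.leftFunc a natural transformation such that: (a) for every object f of Arrow C, f.hom ∘ κ.app f = 0; (b) for every object a of C, κ.app (Arrow.mk (0 : a ⟶ 0)) is an isomorphism; and (c) for every object f of Arrow C, K.map ((κ.app f, 0) : Arrow.mk (0 : K.obj f ⟶ 0) ⟶ f) = κ.app (Arrow.mk (0 : K.obj f ⟶ 0)). Then for every object f of Arrow C, the morphism κ.app f : K.obj f ⟶ f.left is a kernel of f.hom, i.e. the kernel fork KernelFork.ofι (κ.app f) (using (a)) is a limit cone. -/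

import Mathlib

open CategoryTheory CategoryTheory.Limits ZeroObject

universe v u

/-! A morphism `g : W ⟶ f.left` with `g ≫ f.hom = 0` is the same as a morphism of arrows
`(0 : W ⟶ 0) ⟶ f`. Applying `K` to it and precomposing with the inverse of the isomorphism
`κ.app (0 : W ⟶ 0)` gives the lift through `κ.app f`, by naturality of `κ`. For uniqueness,
a lift `l` factors that morphism of arrows through `(0 : K.obj f ⟶ 0)`; condition (c) and
naturality identify the image of the factorisation under `K` with `κ.app (0 : W ⟶ 0) ≫ l`. -/

namespace CategoryTheory.Arrow

variable {C : Type u} [Category.{v} C] [HasZeroObject C] [HasZeroMorphisms C]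

noncomputable def homMkFromZero {W : C} (f : Arrow C) (g : W ⟶ f.left) (hg : g ≫ f.hom = 0) :
    Arrow.mk (0 : W ⟶ 0) ⟶ f :=
  Arrow.homMk g 0 (by simpa using hg)

noncomputable def zeroArrowMap {W X : C} (l : W ⟶ X) :
    Arrow.mk (0 : W ⟶ 0) ⟶ Arrow.mk (0 : X ⟶ 0) :=
  Arrow.homMk l (𝟙 0) (by simp)

lemma zeroArrowMap_comp_homMkFromZero {W X : C} (f : Arrow C) (l : W ⟶ X) (h : X ⟶ f.left)
    (hh : h ≫ f.hom = 0) :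
    zeroArrowMap l ≫ homMkFromZero f h hh =
      homMkFromZero f (l ≫ h) (by rw [Category.assoc, hh, comp_zero]) :=
  Arrow.hom_ext _ _ rfl (Category.id_comp _)

end CategoryTheory.Arrow

namespace CategoryTheory.Limits

open Arrow

variable {C : Type u} [Category.{v} C] [HasZeroObject C] [HasZeroMorphisms C]
  {K : Arrow C ⥤ C} (κ : K ⟶ Arrow.leftFunc)

lemma map_homMkFromZero_comp_app {W : C} (f : Arrow C) (g : W ⟶ f.left) (hg : g ≫ f.hom = 0) :
    K.map (homMkFromZero f g hg) ≫ κ.app f = κ.app (Arrow.mk (0 : W ⟶ 0)) ≫ g :=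
  κ.naturality _

lemma map_homMkFromZero_eq_app_comp {W : C} (f : Arrow C) (hf : κ.app f ≫ f.hom = 0)
    (hc : K.map (homMkFromZero f (κ.app f) hf) = κ.app (Arrow.mk (0 : K.obj f ⟶ 0)))
    (l : W ⟶ K.obj f) (hg : (l ≫ κ.app f) ≫ f.hom = 0) :
    K.map (homMkFromZero f (l ≫ κ.app f) hg) = κ.app (Arrow.mk (0 : W ⟶ 0)) ≫ l := by
  rw [← zeroArrowMap_comp_homMkFromZero f l _ hf, K.map_comp, hc]
  exact κ.naturality _

noncomputable def isLimitKernelForkOfι (hiso : ∀ a : C, IsIso (κ.app (Arrow.mk (0 : a ⟶ 0))))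
    (f : Arrow C) (hf : κ.app f ≫ f.hom = 0)
    (hc : K.map (homMkFromZero f (κ.app f) hf) = κ.app (Arrow.mk (0 : K.obj f ⟶ 0))) :
    IsLimit (KernelFork.ofι (κ.app f) hf) :=
  haveI := hiso
  KernelFork.IsLimit.ofι _ _
    (fun {W} g hg => (asIso (κ.app (Arrow.mk (0 : W ⟶ 0)))).inv ≫ K.map (homMkFromZero f g hg))
    (fun g hg => (Category.assoc _ _ _).trans
      ((Iso.inv_comp_eq _).mpr (map_homMkFromZero_comp_app κ f g hg)))
    (fun g hg l hl => by
      subst hl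
      exact (Iso.eq_inv_comp _).mpr (map_homMkFromZero_eq_app_comp κ f hf hc l hg).symm)

end CategoryTheory.Limits

/-- Let `C` be a pointed category, `K : Arrow C ⥤ C` a functor and
`κ : K ⟶ Arrow.leftFunc` a natural transformation such that
(a) `κ.app f ≫ f.hom = 0` for every object `f` of `Arrow C`;
(b) `κ.app (Arrow.mk (0 : a ⟶ 0))` is an isomorphism for every object `a` of `C`; and
(c) for every `f`, `K.map ((κ.app f, 0) : Arrow.mk (0 : K.obj f ⟶ 0) ⟶ f)` equals
`κ.app (Arrow.mk (0 : K.obj f ⟶ 0))`.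
Then for every object `f` of `Arrow C`, the morphism `κ.app f : K.obj f ⟶ f.left` is a
kernel of `f.hom`, i.e. the kernel fork `KernelFork.ofι (κ.app f) (h0 f)` is a limit cone. -/
theorem stmt4 (C : Type u) [Category.{v} C] [HasZeroObject C] [HasZeroMorphisms C]
    (K : Arrow C ⥤ C) (κ : K ⟶ Arrow.leftFunc)
    (h0 : ∀ f : Arrow C, κ.app f ≫ f.hom = 0)
    (hiso : ∀ a : C, IsIso (κ.app (Arrow.mk (0 : a ⟶ 0))))
    (hc : ∀ f : Arrow C,
      K.map (Arrow.homMk (f := Arrow.mk (0 : K.obj f ⟶ 0)) (g := f)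
          (u := κ.app f) (v := (0 : (0 : C) ⟶ f.right)) (by simp; exact h0 f)) =
        κ.app (Arrow.mk (0 : K.obj f ⟶ 0))) :
    ∀ f : Arrow C, Nonempty (IsLimit (KernelFork.ofι (κ.app f) (h0 f))) :=
  fun f => ⟨isLimitKernelForkOfι κ hiso f (h0 f) (hc f)⟩
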